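/- arXiv:2401.08850 — 7 statements merged into one kernel-verified Lean document; each statement's English description precedes it below -/
import Mathlib

section
/- For natural numbers n_1, ..., n_N with each n_i ≥ 2 and N ≥ 1, (1/N) Σ_{i=1}^N (n_i - 1)/(n_i + 1) ≤ (∏_{i=1}^N n_i - 1)/(∏_{i=1}^N n_i + 1). -/
open Finset
open scoped BigOperators

/- Each fraction is at most the one for the product, since `x ↦ (x - 1) / (x + 1) = 1 - 2 / (x + 1)`
is monotone and every factor `n i ≥ 1` is at most the product; an average of terms bounded by a
constant is bounded by it. -/

theorem sub_one_div_add_one_le_sub_one_div_add_one {K : Type*} [Field K] [LinearOrder K]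
    [IsStrictOrderedRing K] {x y : K} (hx : -1 < x) (hxy : x ≤ y) :
    (x - 1) / (x + 1) ≤ (y - 1) / (y + 1) := by
  rw [div_le_div_iff₀ (by linarith) (by linarith)]
  nlinarith

theorem mean_frac_le_prod_frac (N : ℕ) (hN : 1 ≤ N) (n : Fin N → ℕ)
    (hn : ∀ i, 2 ≤ n i) :
    (1 / (N : ℝ)) * ∑ i, ((n i : ℝ) - 1) / ((n i : ℝ) + 1)
      ≤ ((∏ i, (n i : ℝ)) - 1) / ((∏ i, (n i : ℝ)) + 1) := by
  have : Nonempty (Fin N) := ⟨⟨0, hN⟩⟩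
  have factor_le_prod (i : Fin N) : (n i : ℝ) ≤ ∏ j, (n j : ℝ) := by
    exact_mod_cast single_le_prod' (fun j _ => one_le_two.trans (hn j)) (mem_univ i)
  calc (1 / (N : ℝ)) * ∑ i, ((n i : ℝ) - 1) / ((n i : ℝ) + 1)
      = 𝔼 i, ((n i : ℝ) - 1) / ((n i : ℝ) + 1) := by
        rw [Fintype.expect_eq_sum_div_card, Fintype.card_fin, one_div_mul_eq_div]
    _ ≤ ((∏ i, (n i : ℝ)) - 1) / ((∏ i, (n i : ℝ)) + 1) :=
        expect_le univ_nonempty fun i _ => sub_one_div_add_one_le_sub_one_div_add_one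
          (by linarith [(n i).cast_nonneg (α := ℝ)]) (factor_le_prod i)
end

section
/- For natural numbers n_1, ..., n_N with each n_i ≥ 2 and N ≥ 1, (∏_{i=1}^N n_i) / ((1 + ∏_{i=1}^N n_i)²(2 + ∏_{i=1}^N n_i)) ≤ (1/N²) Σ_{i=1}^N n_i / ((n_i + 1)²(n_i + 2)). -/
/-!
Let `u x = (x + 1) ^ 2 * (x + 2) / x` (`varFracInv`), the reciprocal of the summand.
For `x, y ≥ 2` one has `u x + u y ≤ u (x * y)`, so `∑ u (n i) ≤ u (∏ n i)` by induction,
and Sedrakyan's form of Cauchy–Schwarz gives `N ^ 2 / ∑ u (n i) ≤ ∑ 1 / u (n i)`.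
-/

open Finset

noncomputable def varFracInv (x : ℝ) : ℝ := (x + 1) ^ 2 * (x + 2) / x

lemma varFracInv_pos {x : ℝ} (hx : 0 < x) : 0 < varFracInv x := by
  unfold varFracInv; positivity

lemma varFracInv_add_le_mul {x y : ℝ} (hx : 2 ≤ x) (hy : 2 ≤ y) :
    varFracInv x + varFracInv y ≤ varFracInv (x * y) := by
  obtain ⟨a, ha, rfl⟩ : ∃ a ≥ 0, x = a + 2 := ⟨x - 2, by linarith, by ring⟩
  obtain ⟨b, hb, rfl⟩ : ∃ b ≥ 0, y = b + 2 := ⟨y - 2, by linarith, by ring⟩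
  unfold varFracInv
  -- in the shifted variables `a, b` the cleared difference has only nonnegative coefficients
  rw [div_add_div _ _ (by positivity) (by positivity),
    div_le_div_iff₀ (by positivity) (by positivity), ← sub_nonneg]
  ring_nf
  positivity

lemma two_le_prod_of_two_le {ι : Type*} {s : Finset ι} {x : ι → ℝ} (hs : s.Nonempty)
    (hx : ∀ i ∈ s, 2 ≤ x i) : 2 ≤ ∏ i ∈ s, x i := by
  classical
  obtain ⟨j, hj⟩ := hs
  rw [← mul_prod_erase s x hj]
  have hrest : 1 ≤ ∏ i ∈ s.erase j, x i :=
    one_le_prod fun i hi => by linarith [hx i (mem_of_mem_erase hi)]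
  nlinarith [hx j hj]

lemma sum_varFracInv_le_prod {ι : Type*} {s : Finset ι} {x : ι → ℝ} (hs : s.Nonempty)
    (hx : ∀ i ∈ s, 2 ≤ x i) :
    ∑ i ∈ s, varFracInv (x i) ≤ varFracInv (∏ i ∈ s, x i) := by
  induction hs using Nonempty.cons_induction with
  | singleton j => simp
  | cons j t hj ht ih =>
    rw [sum_cons, prod_cons]
    have hx' : ∀ i ∈ t, 2 ≤ x i := fun i hi => hx i (mem_cons_of_mem hi)
    calc varFracInv (x j) + ∑ i ∈ t, varFracInv (x i)
        ≤ varFracInv (x j) + varFracInv (∏ i ∈ t, x i) := by gcongr; exact ih hx'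
      _ ≤ varFracInv (x j * ∏ i ∈ t, x i) :=
        varFracInv_add_le_mul (hx j (mem_cons_self j t)) (two_le_prod_of_two_le ht hx')

lemma card_sq_div_varFracInv_prod_le {ι : Type*} {s : Finset ι} {x : ι → ℝ} (hs : s.Nonempty)
    (hx : ∀ i ∈ s, 2 ≤ x i) :
    (#s : ℝ) ^ 2 / varFracInv (∏ i ∈ s, x i) ≤ ∑ i ∈ s, (varFracInv (x i))⁻¹ := by
  have hpos : ∀ i ∈ s, 0 < varFracInv (x i) := fun i hi =>
    varFracInv_pos (by linarith [hx i hi])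
  calc (#s : ℝ) ^ 2 / varFracInv (∏ i ∈ s, x i)
      ≤ (#s : ℝ) ^ 2 / ∑ i ∈ s, varFracInv (x i) :=
        div_le_div_of_nonneg_left (by positivity) (sum_pos hpos hs) (sum_varFracInv_le_prod hs hx)
    _ ≤ ∑ i ∈ s, (1 : ℝ) ^ 2 / varFracInv (x i) := by
        simpa using sq_sum_div_le_sum_sq_div s (fun _ => (1 : ℝ)) hpos
    _ = ∑ i ∈ s, (varFracInv (x i))⁻¹ := by simp

theorem prod_var_frac_le_mean_var_frac (N : ℕ) (hN : 1 ≤ N) (n : Fin N → ℕ)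
    (hn : ∀ i, 2 ≤ n i) :
    (∏ i, (n i : ℝ)) / ((1 + ∏ i, (n i : ℝ)) ^ 2 * (2 + ∏ i, (n i : ℝ)))
      ≤ (1 / (N : ℝ) ^ 2) * ∑ i, (n i : ℝ) / (((n i : ℝ) + 1) ^ 2 * ((n i : ℝ) + 2)) := by
  have hne : (univ : Finset (Fin N)).Nonempty := univ_nonempty_iff.2 ⟨⟨0, hN⟩⟩
  have key := card_sq_div_varFracInv_prod_le hne fun i _ =>
    (by exact_mod_cast hn i : (2 : ℝ) ≤ n i)
  rw [card_univ, Fintype.card_fin] at key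
  have hP : (0 : ℝ) < ∏ i, (n i : ℝ) :=
    prod_pos fun i _ => by exact_mod_cast (hn i).trans_lt' two_pos
  calc _ = (N : ℝ) ^ 2 / varFracInv (∏ i, (n i : ℝ)) / (N : ℝ) ^ 2 := by
        unfold varFracInv; field_simp; ring
    _ ≤ (∑ i, (varFracInv (n i))⁻¹) / (N : ℝ) ^ 2 := by gcongr
    _ = _ := by simp only [varFracInv, inv_div]; ring
end

section
/- For g(x) = (1+x)²(1 + 2/x) and natural numbers n_1, ..., n_N each at least 2 with N ≥ 1, g(∏_{i=1}^N n_i) ≥ N · g((1/N) Σ_{i=1}^N n_i). -/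
open Finset

/-! Since `g x = x ^ 2 + 4 * x + 5 + 2 / x`, `g` is increasing on `[1, ∞)`, and for `N, m ≥ 2`
`g (N * m) - N * g m = (N - 1) * (N * m ^ 2 - 5 - 2 * (N + 1) / (N * m)) ≥ 0`. With `m` the mean of
the `nᵢ` this bounds the left side by `g (∑ nᵢ)`, and `∑ nᵢ ≤ ∏ nᵢ` because `a + b ≤ a * b` for
`a, b ≥ 2`. -/

noncomputable def g (x : ℝ) : ℝ := (1 + x) ^ 2 * (1 + 2 / x)

lemma g_eq_of_ne_zero {x : ℝ} (hx : x ≠ 0) : g x = x ^ 2 + 4 * x + 5 + 2 / x := by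
  unfold g
  field_simp
  ring

lemma g_monotoneOn : MonotoneOn g (Set.Ici 1) := by
  intro a (ha : 1 ≤ a) b (hb : 1 ≤ b) hab
  have ha0 : 0 < a := by linarith
  have hb0 : 0 < b := by linarith
  have hrecip : 2 / a - 2 / b ≤ 2 * (b - a) := by
    rw [div_sub_div _ _ ha0.ne' hb0.ne', div_le_iff₀ (by positivity)]
    nlinarith [mul_le_mul ha hb zero_le_one ha0.le]
  rw [g_eq_of_ne_zero ha0.ne', g_eq_of_ne_zero hb0.ne']
  nlinarith

lemma mul_g_le_g_mul {N m : ℝ} (hN : 2 ≤ N) (hm : 2 ≤ m) : N * g m ≤ g (N * m) := by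
  have hNm : 2 * N ≤ N * m := by nlinarith
  have hfactor : g (N * m) - N * g m = (N - 1) * (N * m ^ 2 - 5 - 2 * (N + 1) / (N * m)) := by
    rw [g_eq_of_ne_zero (by positivity), g_eq_of_ne_zero (by positivity)]
    field_simp
    ring
  have hrecip : 2 * (N + 1) / (N * m) ≤ 2 := by
    rw [div_le_iff₀ (by positivity)]
    linarith
  have hsq : 8 ≤ N * m ^ 2 := by nlinarith
  nlinarith

section SumLeProd

variable {ι R : Type*} [CommSemiring R] [LinearOrder R] [IsStrictOrderedRing R]

lemma Finset.Nonempty.two_le_prod_and_sum_le_prod {s : Finset ι} (hs : s.Nonempty) {f : ι → R}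
    (hf : ∀ i ∈ s, 2 ≤ f i) : 2 ≤ ∏ i ∈ s, f i ∧ ∑ i ∈ s, f i ≤ ∏ i ∈ s, f i := by
  induction hs using Finset.Nonempty.cons_induction with
  | singleton a => simpa using hf a (mem_singleton_self a)
  | cons a s ha hs ih =>
    rw [forall_mem_cons] at hf
    obtain ⟨htwo, hle⟩ := ih hf.2
    rw [sum_cons, prod_cons]
    refine ⟨?_, ?_⟩
    · calc (2 : R) ≤ f a := hf.1
        _ ≤ f a * ∏ i ∈ s, f i := le_mul_of_one_le_right (zero_le_two.trans hf.1)
            (one_le_two.trans htwo)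
    · calc f a + ∑ i ∈ s, f i ≤ f a + ∏ i ∈ s, f i := add_le_add_right hle _
        _ ≤ f a * ∏ i ∈ s, f i := add_le_mul hf.1 htwo

lemma Finset.sum_le_prod_of_two_le {s : Finset ι} {f : ι → R} (hf : ∀ i ∈ s, 2 ≤ f i) :
    ∑ i ∈ s, f i ≤ ∏ i ∈ s, f i := by
  rcases s.eq_empty_or_nonempty with rfl | hs
  · simp
  · exact (hs.two_le_prod_and_sum_le_prod hf).2

end SumLeProd

theorem g_prod_ge_N_mul_g_mean (N : ℕ) (hN : 1 ≤ N) (n : Fin N → ℕ)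
    (hn : ∀ i, 2 ≤ n i) :
    (N : ℝ) * ((1 + (1 / (N : ℝ)) * ∑ i, (n i : ℝ)) ^ 2
        * (1 + 2 / ((1 / (N : ℝ)) * ∑ i, (n i : ℝ))))
      ≤ (1 + ∏ i, (n i : ℝ)) ^ 2 * (1 + 2 / (∏ i, (n i : ℝ))) := by
  change (N : ℝ) * g (1 / N * ∑ i, (n i : ℝ)) ≤ g (∏ i, (n i : ℝ))
  have hn' : ∀ i ∈ univ, (2 : ℝ) ≤ n i := fun i _ => by exact_mod_cast hn i
  have hsum : 2 * (N : ℝ) ≤ ∑ i, (n i : ℝ) := by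
    simpa [mul_comm] using card_nsmul_le_sum univ _ 2 hn'
  have hSP : ∑ i, (n i : ℝ) ≤ ∏ i, (n i : ℝ) := sum_le_prod_of_two_le hn'
  have hS : ∑ i, (n i : ℝ) ∈ Set.Ici 1 := by
    simp only [Set.mem_Ici]
    linarith [show (1 : ℝ) ≤ N by exact_mod_cast hN]
  have hmono := g_monotoneOn hS (Set.mem_Ici.2 (hS.trans hSP)) hSP
  obtain rfl | hN2 : N = 1 ∨ 2 ≤ N := by omega
  · simp only [Nat.cast_one, one_mul, div_one]
    exact hmono
  have hN0 : (0 : ℝ) < N := by positivity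
  have hmean : 2 ≤ 1 / (N : ℝ) * ∑ i, (n i : ℝ) := by
    rw [one_div_mul_eq_div, le_div_iff₀ hN0]
    linarith
  calc (N : ℝ) * g (1 / N * ∑ i, (n i : ℝ))
      ≤ g (N * (1 / N * ∑ i, (n i : ℝ))) := mul_g_le_g_mul (by exact_mod_cast hN2) hmean
    _ = g (∑ i, (n i : ℝ)) := by rw [← mul_assoc, mul_one_div_cancel hN0.ne', one_mul]
    _ ≤ g (∏ i, (n i : ℝ)) := hmono
end

section
/- For natural numbers n_1, ..., n_N with each n_i ≥ 2 and N ≥ 1, Σ_{i=1}^N (n_i - 1)/(n_i + 1) ≥ (∏_{i=1}^N n_i - 1)/(∏_{i=1}^N n_i + 1). -/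
/-!
Put `f x = (x - 1) / (x + 1)`, so that `f (e ^ (2 * u)) = tanh u`. The addition formula for `tanh`
becomes `f (a * b) = (f a + f b) / (1 + f a * f b)` for `a, b ≥ 0`, and since `f ≥ 0` on `[1, ∞)`
this gives `f (a * b) ≤ f a + f b` there; induction over the factors finishes.
-/

open Finset

section SubOneDivAddOne

variable {K : Type*} [Field K] [LinearOrder K] [IsStrictOrderedRing K]

lemma sub_one_div_add_one_nonneg {a : K} (ha : 1 ≤ a) : 0 ≤ (a - 1) / (a + 1) :=
  div_nonneg (by linarith) (by linarith)

lemma mul_sub_one_div_mul_add_one {a b : K} (ha : 0 ≤ a) (hb : 0 ≤ b) :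
    (a * b - 1) / (a * b + 1) =
      ((a - 1) / (a + 1) + (b - 1) / (b + 1)) / (1 + (a - 1) / (a + 1) * ((b - 1) / (b + 1))) := by
  have ha' : a + 1 ≠ 0 := by positivity
  have hb' : b + 1 ≠ 0 := by positivity
  have hden :
      1 + (a - 1) / (a + 1) * ((b - 1) / (b + 1)) = 2 * (a * b + 1) / ((a + 1) * (b + 1)) := by
    field_simp
    ring
  rw [hden, div_div_eq_mul_div]
  field_simp
  ring

lemma add_div_one_add_mul_le_add {s t : K} (hs : 0 ≤ s) (ht : 0 ≤ t) :
    (s + t) / (1 + s * t) ≤ s + t :=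
  div_le_self (add_nonneg hs ht) (le_add_of_nonneg_right (mul_nonneg hs ht))

lemma mul_sub_one_div_mul_add_one_le {a b : K} (ha : 1 ≤ a) (hb : 1 ≤ b) :
    (a * b - 1) / (a * b + 1) ≤ (a - 1) / (a + 1) + (b - 1) / (b + 1) := by
  rw [mul_sub_one_div_mul_add_one (by linarith) (by linarith)]
  exact add_div_one_add_mul_le_add (sub_one_div_add_one_nonneg ha) (sub_one_div_add_one_nonneg hb)

lemma prod_sub_one_div_prod_add_one_le_sum {ι : Type*} (s : Finset ι) (x : ι → K)
    (hx : ∀ i ∈ s, 1 ≤ x i) :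
    ((∏ i ∈ s, x i) - 1) / ((∏ i ∈ s, x i) + 1) ≤ ∑ i ∈ s, (x i - 1) / (x i + 1) := by
  induction s using Finset.cons_induction with
  | empty => simp
  | cons j s _ ih =>
    rw [forall_mem_cons] at hx
    rw [prod_cons, sum_cons]
    calc _ ≤ (x j - 1) / (x j + 1) + ((∏ i ∈ s, x i) - 1) / ((∏ i ∈ s, x i) + 1) :=
          mul_sub_one_div_mul_add_one_le hx.1 (one_le_prod hx.2)
      _ ≤ _ := add_le_add_right (ih hx.2) _

end SubOneDivAddOne

theorem sum_frac_ge_prod_frac_general (N : ℕ) (n : Fin N → ℕ)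
    (hn : ∀ i, 2 ≤ n i) :
    ((∏ i, (n i : ℝ)) - 1) / ((∏ i, (n i : ℝ)) + 1)
      ≤ ∑ i, ((n i : ℝ) - 1) / ((n i : ℝ) + 1) :=
  prod_sub_one_div_prod_add_one_le_sum _ _ fun i _ => Nat.one_le_cast.2 (by linarith [hn i])

theorem sum_frac_ge_prod_frac (N : ℕ) (hN : 1 ≤ N) (n : Fin N → ℕ)
    (hn : ∀ i, 2 ≤ n i) :
    ((∏ i, (n i : ℝ)) - 1) / ((∏ i, (n i : ℝ)) + 1)
      ≤ ∑ i, ((n i : ℝ) - 1) / ((n i : ℝ) + 1) :=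
  sum_frac_ge_prod_frac_general N n hn
end

section
/- DecQN variance increase: with γ ∈ [0,1], b > 0, and natural numbers n_1, ..., n_N ≥ 2, γ² · 4b² M / ((M+1)²(M+2)) ≤ (γ²/N²) Σ_{i=1}^N 4b² n_i / ((n_i+1)²(n_i+2)), where M = ∏_{i=1}^N n_i. Equivalently, Var(Z^dqn) ≤ Var(Z^dec). -/
/-!
Write `v x = x / ((x + 1)² (x + 2))`, so that both sides are `4 γ² b²` times `v M` and the mean of
the `v nᵢ` divided by `N`. The reciprocal `1 / v` is superadditive under multiplication on
`[2, ∞)`: `1 / v a + 1 / v b ≤ 1 / v (a b)`. Hence `∑ 1 / v nᵢ ≤ 1 / v M`, and the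
Cauchy–Schwarz (Sedrakyan) inequality `N² / ∑ 1 / v nᵢ ≤ ∑ v nᵢ` gives `N² v M ≤ ∑ v nᵢ`.
-/

open Finset

/-- The variance of the maximum of `x` i.i.d. `Uniform(0, 1)` variables; for `Uniform(-b, b)` it
is scaled by `(2b)²`. -/
noncomputable def varMaxUniform (x : ℝ) : ℝ := x / ((x + 1) ^ 2 * (x + 2))

lemma varMaxUniform_pos {x : ℝ} (hx : 0 < x) : 0 < varMaxUniform x := by
  unfold varMaxUniform
  positivity

lemma inv_varMaxUniform_add_le {a b : ℝ} (ha : 2 ≤ a) (hb : 2 ≤ b) :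
    (varMaxUniform a)⁻¹ + (varMaxUniform b)⁻¹ ≤ (varMaxUniform (a * b))⁻¹ := by
  have ha' := sub_nonneg.2 ha
  have hb' := sub_nonneg.2 hb
  have key : b * ((a + 1) ^ 2 * (a + 2)) + a * ((b + 1) ^ 2 * (b + 2))
      ≤ (a * b + 1) ^ 2 * (a * b + 2) := by
    nlinarith [mul_nonneg ha' hb', mul_nonneg (mul_nonneg ha' hb') ha',
      mul_nonneg (mul_nonneg ha' hb') hb', mul_nonneg (mul_nonneg ha' hb') (mul_nonneg ha' hb')]
  simp only [varMaxUniform, inv_div]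
  rw [div_add_div _ _ (by positivity) (by positivity), div_le_div_iff₀ (by positivity) (by positivity)]
  nlinarith [mul_le_mul_of_nonneg_left key (by positivity : (0 : ℝ) ≤ a * b)]

lemma sum_inv_varMaxUniform_le {ι : Type*} {s : Finset ι} (hs : s.Nonempty) {x : ι → ℝ}
    (hx : ∀ i ∈ s, 2 ≤ x i) :
    ∑ i ∈ s, (varMaxUniform (x i))⁻¹ ≤ (varMaxUniform (∏ i ∈ s, x i))⁻¹ := by
  induction hs using Finset.Nonempty.cons_induction with
  | singleton j => simp
  | cons j s hj hs ih =>
    simp only [mem_cons, forall_eq_or_imp] at hx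
    have hprod : 2 ≤ ∏ i ∈ s, x i :=
      calc (2 : ℝ) = 2 ^ 1 := (pow_one 2).symm
        _ ≤ 2 ^ #s := pow_le_pow_right₀ one_le_two (card_pos.2 hs)
        _ = ∏ _i ∈ s, (2 : ℝ) := (prod_const 2).symm
        _ ≤ ∏ i ∈ s, x i := prod_le_prod (fun _ _ => zero_le_two) hx.2
    rw [sum_cons, prod_cons]
    exact (add_le_add_right (ih hx.2) _).trans (inv_varMaxUniform_add_le hx.1 hprod)

lemma card_sq_mul_varMaxUniform_prod_le {ι : Type*} {s : Finset ι} (hs : s.Nonempty)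
    {x : ι → ℝ} (hx : ∀ i ∈ s, 2 ≤ x i) :
    (#s : ℝ) ^ 2 * varMaxUniform (∏ i ∈ s, x i) ≤ ∑ i ∈ s, varMaxUniform (x i) := by
  have hpos : ∀ i ∈ s, 0 < (varMaxUniform (x i))⁻¹ := fun i hi =>
    inv_pos.2 (varMaxUniform_pos (by linarith [hx i hi]))
  have hsum_pos : 0 < ∑ i ∈ s, (varMaxUniform (x i))⁻¹ := sum_pos hpos hs
  calc (#s : ℝ) ^ 2 * varMaxUniform (∏ i ∈ s, x i)
      = (#s : ℝ) ^ 2 / (varMaxUniform (∏ i ∈ s, x i))⁻¹ := by rw [div_inv_eq_mul]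
    _ ≤ (#s : ℝ) ^ 2 / ∑ i ∈ s, (varMaxUniform (x i))⁻¹ :=
        div_le_div_of_nonneg_left (by positivity) hsum_pos (sum_inv_varMaxUniform_le hs hx)
    _ = (∑ _i ∈ s, (1 : ℝ)) ^ 2 / ∑ i ∈ s, (varMaxUniform (x i))⁻¹ := by simp
    _ ≤ ∑ i ∈ s, (1 : ℝ) ^ 2 / (varMaxUniform (x i))⁻¹ := sq_sum_div_le_sum_sq_div s _ hpos
    _ = ∑ i ∈ s, varMaxUniform (x i) := by simp

theorem decqn_variance_increase_general (γ b : ℝ)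
    (N : ℕ) (hN : 1 ≤ N) (n : Fin N → ℕ) (hn : ∀ i, 2 ≤ n i) :
    γ ^ 2 * (4 * b ^ 2 * (∏ i, (n i : ℝ))
        / (((∏ i, (n i : ℝ)) + 1) ^ 2 * ((∏ i, (n i : ℝ)) + 2)))
      ≤ γ ^ 2 / (N : ℝ) ^ 2
          * ∑ i, 4 * b ^ 2 * (n i : ℝ) / (((n i : ℝ) + 1) ^ 2 * ((n i : ℝ) + 2)) := by
  have hN' : (0 : ℝ) < (N : ℝ) ^ 2 := by positivity
  have hmain := card_sq_mul_varMaxUniform_prod_le (x := fun i => (n i : ℝ))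
    (univ_nonempty_iff.2 ⟨⟨0, hN⟩⟩) fun i _ => by exact_mod_cast hn i
  rw [card_univ, Fintype.card_fin, ← le_div_iff₀' hN'] at hmain
  simp only [mul_div_assoc, ← mul_sum]
  calc γ ^ 2 * (4 * b ^ 2 * varMaxUniform (∏ i, (n i : ℝ)))
      ≤ γ ^ 2 * (4 * b ^ 2 * ((∑ i, varMaxUniform (n i)) / (N : ℝ) ^ 2)) := by gcongr
    _ = _ := by unfold varMaxUniform; ring

/-- DecQN variance increase: `Var(Z^dqn) ≤ Var(Z^dec)`. -/
theorem decqn_variance_increase (γ b : ℝ) (hγ0 : 0 ≤ γ) (hγ1 : γ ≤ 1) (hb : 0 < b)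
    (N : ℕ) (hN : 1 ≤ N) (n : Fin N → ℕ) (hn : ∀ i, 2 ≤ n i) :
    γ ^ 2 * (4 * b ^ 2 * (∏ i, (n i : ℝ))
        / (((∏ i, (n i : ℝ)) + 1) ^ 2 * ((∏ i, (n i : ℝ)) + 2)))
      ≤ γ ^ 2 / (N : ℝ) ^ 2
          * ∑ i, 4 * b ^ 2 * (n i : ℝ) / (((n i : ℝ) + 1) ^ 2 * ((n i : ℝ) + 2)) :=
  decqn_variance_increase_general γ b N hN n hn
end

section
/- Sum-decomposition bias increase: for natural numbers n_1, ..., n_N each at least 2, Σ_{i=1}^N (n_i-1)/(n_i+1) ≥ (M-1)/(M+1) where M = ∏_{i=1}^N n_i; hence the sum value-decomposition target difference satisfies E[Z^dqn] ≤ E[Z^sum] where E[Z^sum] = γb Σ (n_i-1)/(n_i+1) and E[Z^dqn] = γb(M-1)/(M+1), γ ∈ [0,1], b > 0. -/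
/-!
Write `t x = (x - 1) / (x + 1)`. Under `x = exp (2 u)` this is `tanh u`, so the addition formula gives
`t (a * m) = (t a + t m) / (1 + t a * t m) ≤ t a + t m` for `a, m ≥ 1`; induction over the factors of
`M = ∏ nᵢ` then bounds `t M` by `∑ t nᵢ`.
-/

open Finset

variable {K : Type*} [Field K] [LinearOrder K] [IsStrictOrderedRing K]

theorem sub_one_div_add_one_mul_le {a m : K} (ha : 1 ≤ a) (hm : 1 ≤ m) :
    (a * m - 1) / (a * m + 1) ≤ (a - 1) / (a + 1) + (m - 1) / (m + 1) := by
  have ham : 1 ≤ a * m := one_le_mul_of_one_le_of_one_le ha hm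
  have gap : (a - 1) / (a + 1) + (m - 1) / (m + 1) - (a * m - 1) / (a * m + 1)
      = (a * m - 1) * (a - 1) * (m - 1) / ((a + 1) * (m + 1) * (a * m + 1)) := by
    have : a + 1 ≠ 0 := by positivity
    have : m + 1 ≠ 0 := by positivity
    have : a * m + 1 ≠ 0 := by positivity
    field_simp
    ring
  have gap_nonneg : 0 ≤ (a * m - 1) * (a - 1) * (m - 1) / ((a + 1) * (m + 1) * (a * m + 1)) := by
    apply div_nonneg
    · apply mul_nonneg (mul_nonneg _ _) <;> linarith
    · positivity
  linarith

theorem sub_one_div_add_one_prod_le_sum {ι : Type*} (s : Finset ι) {f : ι → K}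
    (hf : ∀ i ∈ s, 1 ≤ f i) :
    ((∏ i ∈ s, f i) - 1) / ((∏ i ∈ s, f i) + 1) ≤ ∑ i ∈ s, (f i - 1) / (f i + 1) := by
  induction s using Finset.cons_induction with
  | empty => simp
  | cons a s ha ih =>
    rw [prod_cons, sum_cons]
    have hs : ∀ i ∈ s, 1 ≤ f i := fun i hi ↦ hf i (mem_cons_of_mem hi)
    calc (f a * ∏ i ∈ s, f i - 1) / (f a * ∏ i ∈ s, f i + 1)
        ≤ (f a - 1) / (f a + 1) + ((∏ i ∈ s, f i) - 1) / ((∏ i ∈ s, f i) + 1) :=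
          sub_one_div_add_one_mul_le (hf a (mem_cons_self a s)) (one_le_prod hs)
      _ ≤ (f a - 1) / (f a + 1) + ∑ i ∈ s, (f i - 1) / (f i + 1) := by
          gcongr
          exact ih hs

theorem sum_decomposition_bias_increase_general (γ b : ℝ) (hγ0 : 0 ≤ γ)
    (hb : 0 < b) (N : ℕ) (n : Fin N → ℕ) (hn : ∀ i, 2 ≤ n i) :
    γ * b * (((∏ i, (n i : ℝ)) - 1) / ((∏ i, (n i : ℝ)) + 1))
      ≤ γ * b * ∑ i, ((n i : ℝ) - 1) / ((n i : ℝ) + 1) := by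
  have hn_one : ∀ i ∈ univ, (1 : ℝ) ≤ n i := fun i _ ↦ by exact_mod_cast (hn i).trans' one_le_two
  exact mul_le_mul_of_nonneg_left (sub_one_div_add_one_prod_le_sum univ hn_one) (by positivity)

/-- Sum-decomposition bias increase: `E[Z^dqn] ≤ E[Z^sum]`. -/
theorem sum_decomposition_bias_increase (γ b : ℝ) (hγ0 : 0 ≤ γ) (hγ1 : γ ≤ 1)
    (hb : 0 < b) (N : ℕ) (hN : 1 ≤ N) (n : Fin N → ℕ) (hn : ∀ i, 2 ≤ n i) :
    γ * b * (((∏ i, (n i : ℝ)) - 1) / ((∏ i, (n i : ℝ)) + 1))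
      ≤ γ * b * ∑ i, ((n i : ℝ) - 1) / ((n i : ℝ) + 1) :=
  sum_decomposition_bias_increase_general γ b hγ0 hb N n hn
end

section
/- Sum-decomposition variance increase: for natural numbers n_1, ..., n_N each at least 2 and reals γ ∈ [0,1], b > 0, γ² · 4b²M/((M+1)²(M+2)) ≤ γ² Σ_{i=1}^N 4b² n_i/((n_i+1)²(n_i+2)), where M = ∏_{i=1}^N n_i; i.e., Var(Z^dqn) ≤ Var(Z^sum). -/
/-!
Write `f(x) = 4b²x / ((x+1)²(x+2))`. Since
`a(m+1)²(m+2) - m(a+1)²(a+2) = (m - a)(am(m+a) + 4am - 2)`, `f` is antitone on `[1, ∞)`.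
The product `M = ∏ nᵢ` dominates each factor `n_{i₀}`, so `f M ≤ f n_{i₀} ≤ ∑ f nᵢ`, all terms
being nonnegative; multiplying by `γ² ≥ 0` gives the claim.
-/

open Finset

theorem Finset.single_le_prod_of_one_le {ι R : Type*} [CommMonoidWithZero R] [Preorder R]
    [ZeroLEOneClass R] [PosMulMono R] {s : Finset ι} {f : ι → R} (hf : ∀ i ∈ s, 1 ≤ f i)
    {a : ι} (ha : a ∈ s) : f a ≤ ∏ i ∈ s, f i := by
  classical
  rw [← mul_prod_erase s f ha]
  exact le_mul_of_one_le_right (zero_le_one.trans (hf a ha))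
    (one_le_prod fun i hi => hf i (mem_of_mem_erase hi))

theorem apply_prod_le_sum_of_antitoneOn {ι : Type*} [Fintype ι] [Nonempty ι] {f : ℝ → ℝ}
    (hf : AntitoneOn f (Set.Ici 1)) (hf₀ : ∀ x, 1 ≤ x → 0 ≤ f x) {x : ι → ℝ}
    (hx : ∀ i, 1 ≤ x i) : f (∏ i, x i) ≤ ∑ i, f (x i) := by
  obtain ⟨i₀⟩ := ‹Nonempty ι›
  have hprod : x i₀ ≤ ∏ i, x i := single_le_prod_of_one_le (fun i _ => hx i) (mem_univ i₀)
  calc f (∏ i, x i) ≤ f (x i₀) := hf (hx i₀) ((hx i₀).trans hprod) hprod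
    _ ≤ ∑ i, f (x i) := single_le_sum (fun i _ => hf₀ _ (hx i)) (mem_univ i₀)

/-- The variance of the maximum of `x` i.i.d. `Uniform(-b, b)` samples. -/
noncomputable def uniformMaxVariance (b x : ℝ) : ℝ :=
  4 * b ^ 2 * x / ((x + 1) ^ 2 * (x + 2))

theorem uniformMaxVariance_nonneg (b : ℝ) {x : ℝ} (hx : 0 ≤ x) : 0 ≤ uniformMaxVariance b x := by
  unfold uniformMaxVariance
  positivity

theorem uniformMaxVariance_antitoneOn (b : ℝ) : AntitoneOn (uniformMaxVariance b) (Set.Ici 1) := by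
  intro a (ha : 1 ≤ a) m (hm : 1 ≤ m) ham
  have hcross : m * ((a + 1) ^ 2 * (a + 2)) ≤ a * ((m + 1) ^ 2 * (m + 2)) := by
    have hfactor : a * ((m + 1) ^ 2 * (m + 2)) - m * ((a + 1) ^ 2 * (a + 2))
        = (m - a) * (a * m * (m + a) + 4 * a * m - 2) := by ring
    have : 0 ≤ (m - a) * (a * m * (m + a) + 4 * a * m - 2) :=
      mul_nonneg (by linarith) (by nlinarith [mul_le_mul ha hm zero_le_one (by linarith)])
    linarith
  unfold uniformMaxVariance
  rw [mul_div_assoc, mul_div_assoc]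
  refine mul_le_mul_of_nonneg_left ?_ (by positivity)
  rwa [div_le_div_iff₀ (by positivity) (by positivity)]

theorem sum_decomposition_variance_increase_general (γ b : ℝ)
    (N : ℕ) (hN : 1 ≤ N) (n : Fin N → ℕ) (hn : ∀ i, 2 ≤ n i) :
    γ ^ 2 * (4 * b ^ 2 * (∏ i, (n i : ℝ))
        / (((∏ i, (n i : ℝ)) + 1) ^ 2 * ((∏ i, (n i : ℝ)) + 2)))
      ≤ γ ^ 2 * ∑ i, 4 * b ^ 2 * (n i : ℝ) / (((n i : ℝ) + 1) ^ 2 * ((n i : ℝ) + 2)) := by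
  have : Nonempty (Fin N) := ⟨⟨0, hN⟩⟩
  have hn₁ (i : Fin N) : (1 : ℝ) ≤ n i := by exact_mod_cast (hn i).trans' one_le_two
  have hvar : uniformMaxVariance b (∏ i, (n i : ℝ)) ≤ ∑ i, uniformMaxVariance b (n i) :=
    apply_prod_le_sum_of_antitoneOn (uniformMaxVariance_antitoneOn b)
      (fun x hx => uniformMaxVariance_nonneg b (zero_le_one.trans hx)) hn₁
  exact mul_le_mul_of_nonneg_left hvar (sq_nonneg γ)

/-- Sum-decomposition variance increase: `Var(Z^dqn) ≤ Var(Z^sum)`. -/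
theorem sum_decomposition_variance_increase (γ b : ℝ) (hγ0 : 0 ≤ γ) (hγ1 : γ ≤ 1)
    (hb : 0 < b) (N : ℕ) (hN : 1 ≤ N) (n : Fin N → ℕ) (hn : ∀ i, 2 ≤ n i) :
    γ ^ 2 * (4 * b ^ 2 * (∏ i, (n i : ℝ))
        / (((∏ i, (n i : ℝ)) + 1) ^ 2 * ((∏ i, (n i : ℝ)) + 2)))
      ≤ γ ^ 2 * ∑ i, 4 * b ^ 2 * (n i : ℝ) / (((n i : ℝ) + 1) ^ 2 * ((n i : ℝ) + 2)) :=
  sum_decomposition_variance_increase_general γ b N hN n hn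
end
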